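/- arXiv:2504.04049 — 2 statements merged into one kernel-verified Lean document; each statement's English description precedes it below -/
import Mathlib

section
/- Let (d_{n,k}) = (g, f) be a Riordan type array. There exists a unique A = Σ_{j≥0} a_j t^j ∈ K[[t]] such that A(t·f) = f (equivalently, A(t) = t / \overline{tf}(t), where \overline{tf} is the compositional inverse of t·f, which exists since t·f has order 1). For this A-sequence (a_j), one has d_{n,k} = Σ_{j=0}^{n} a_j d_{n−j, k+j−1} for all n ≥ 0 and all k ≥ 1. -/
open PowerSeries Finset

/-- Formal substitution `F(u)`: for `u` with zero constant term, the `n`-th coefficient of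
`F(u)` is `∑_{k ≤ n} F_k · [t^n] u^k`. -/
noncomputable def psComp {K : Type*} [CommRing K] (F u : K⟦X⟧) : K⟦X⟧ :=
  PowerSeries.mk fun n => ∑ k ∈ Finset.range (n + 1), coeff k F * coeff n (u ^ k)

/-!
Writing `a_j = [t^j] A`, the equation `A(t f) = f` reads `[t^n] f = ∑_{j ≤ n} a_j [t^{n-j}] f^j`,
a lower triangular system in the `a_j` whose diagonal entries `f(0)^n` are nonzero; hence it has
exactly one solution. Since `A(t f)` agrees with the polynomial `∑_{j ≤ n} a_j (t f)^j` up to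
degree `n`, multiplying `f = A(t f)` by `g f^{k-1}` and comparing `t^n`-coefficients gives
`[t^n] g f^k = ∑_{j ≤ n} a_j [t^{n-j}] g f^{k+j-1}`.
-/

section LowerTriangular

variable {K : Type*} [DivisionRing K] (c : ℕ → ℕ → K) (b : ℕ → K)

noncomputable def lowerTriangularSolve : ℕ → K
  | n => (b n - ∑ j ∈ (range n).attach, lowerTriangularSolve j * c n j) / c n n
  termination_by n => n
  decreasing_by exact mem_range.mp j.2

theorem sum_lowerTriangularSolve_mul (hc : ∀ n, c n n ≠ 0) (n : ℕ) :
    ∑ j ∈ range (n + 1), lowerTriangularSolve c b j * c n j = b n := by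
  rw [sum_range_succ, lowerTriangularSolve, div_mul_cancel₀ _ (hc n),
    sum_attach (range n) fun j => lowerTriangularSolve c b j * c n j, add_sub_cancel]

theorem existsUnique_lowerTriangular_solution (hc : ∀ n, c n n ≠ 0) :
    ∃! a : ℕ → K, ∀ n, ∑ j ∈ range (n + 1), a j * c n j = b n := by
  refine ⟨lowerTriangularSolve c b, sum_lowerTriangularSolve_mul c b hc, fun a ha => ?_⟩
  funext n
  induction n using Nat.strong_induction_on with
  | _ n ih =>
    have hn := (ha n).trans (sum_lowerTriangularSolve_mul c b hc n).symm
    rw [sum_range_succ, sum_range_succ,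
      sum_congr rfl fun j hj => congrArg (· * c n j) (ih j (mem_range.mp hj))] at hn
    exact mul_right_cancel₀ (hc n) (add_left_cancel hn)

end LowerTriangular

section Substitution

variable {R : Type*} [CommRing R]

theorem coeff_pow_eq_zero_of_lt {u : R⟦X⟧} (hu : constantCoeff u = 0) {m j : ℕ} (hmj : m < j) :
    coeff m (u ^ j) = 0 :=
  X_pow_dvd_iff.mp (pow_dvd_pow_of_dvd (X_dvd_iff.mpr hu) j) m hmj

theorem trunc_psComp (A : R⟦X⟧) {u : R⟦X⟧} (hu : constantCoeff u = 0) (n : ℕ) :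
    trunc (n + 1) (psComp A u) = trunc (n + 1) (∑ j ∈ range (n + 1), C (coeff j A) * u ^ j) := by
  ext m
  simp only [coeff_trunc]
  split_ifs with hm
  · simp only [psComp, coeff_mk, map_sum, coeff_C_mul]
    refine sum_subset (range_subset_range.mpr hm) fun j _ hj => ?_
    rw [coeff_pow_eq_zero_of_lt hu (by simpa using hj), mul_zero]
  · rfl

theorem coeff_mul_psComp (A h : R⟦X⟧) {u : R⟦X⟧} (hu : constantCoeff u = 0) (n : ℕ) :
    coeff n (h * psComp A u) = ∑ j ∈ range (n + 1), coeff j A * coeff n (h * u ^ j) := by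
  rw [coeff_mul_eq_coeff_trunc_mul_trunc _ _ n.lt_succ_self, trunc_psComp A hu,
    ← coeff_mul_eq_coeff_trunc_mul_trunc _ _ n.lt_succ_self, mul_sum, map_sum]
  refine sum_congr rfl fun j _ => ?_
  rw [mul_left_comm, coeff_C_mul]

theorem coeff_mul_psComp_X_mul (A f h : R⟦X⟧) (n : ℕ) :
    coeff n (h * psComp A (X * f)) =
      ∑ j ∈ range (n + 1), coeff j A * coeff (n - j) (h * f ^ j) := by
  rw [coeff_mul_psComp A h (by simp) n]
  refine sum_congr rfl fun j hj => ?_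
  rw [mul_pow, mul_left_comm, coeff_X_pow_mul', if_pos (Nat.le_of_lt_succ (mem_range.mp hj))]

theorem psComp_X_mul_eq_iff (A f : R⟦X⟧) :
    psComp A (X * f) = f ↔
      ∀ n, ∑ j ∈ range (n + 1), coeff j A * coeff (n - j) (f ^ j) = coeff n f := by
  refine PowerSeries.ext_iff.trans (forall_congr' fun n => ?_)
  rw [← one_mul (psComp A (X * f)), coeff_mul_psComp_X_mul]
  simp only [one_mul]

end Substitution

theorem existsUnique_psComp_X_mul_eq {K : Type*} [Field K] {f : K⟦X⟧}
    (hf0 : constantCoeff f ≠ 0) : ∃! A : K⟦X⟧, psComp A (X * f) = f := by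
  obtain ⟨a, ha, ha_unique⟩ := existsUnique_lowerTriangular_solution
    (fun n j => coeff (n - j) (f ^ j)) (fun n => coeff n f) fun n => by simpa using pow_ne_zero n hf0
  refine ⟨mk a, (psComp_X_mul_eq_iff _ f).mpr (by simpa using ha), fun B hB => ?_⟩
  ext n
  simpa using congrFun (ha_unique (fun j => coeff j B) ((psComp_X_mul_eq_iff B f).mp hB)) n

theorem stmt6_general {K : Type*} [Field K]
    (g f : K⟦X⟧) (hf0 : constantCoeff f ≠ 0)
    (d : ℕ → ℕ → K) (hd : ∀ n k, d n k = coeff n (g * f ^ k)) :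
    (∃! A : K⟦X⟧, psComp A (X * f) = f) ∧
    ∀ A : K⟦X⟧, psComp A (X * f) = f →
      ∀ n k, 1 ≤ k →
        d n k = ∑ j ∈ Finset.range (n + 1), coeff j A * d (n - j) (k + j - 1) := by
  refine ⟨existsUnique_psComp_X_mul_eq hf0, fun A hA n k hk => ?_⟩
  obtain ⟨k, rfl⟩ : ∃ m, k = m + 1 := ⟨k - 1, by omega⟩
  have h := coeff_mul_psComp_X_mul A f (g * f ^ k) n
  rw [hA] at h
  rw [hd, pow_succ, ← mul_assoc, h]
  refine sum_congr rfl fun j _ => ?_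
  rw [hd, mul_assoc, ← pow_add, Nat.add_right_comm, Nat.add_sub_cancel]

/-- Existence and uniqueness of the `A`-sequence of a Riordan type array `(g, f)`
(entries `d_{n,k} = [t^n] g f^k`), and the recurrence it induces. -/
theorem stmt6 {K : Type*} [Field K] [CharZero K]
    (g f : K⟦X⟧) (hg0 : constantCoeff g ≠ 0) (hf0 : constantCoeff f ≠ 0)
    (d : ℕ → ℕ → K) (hd : ∀ n k, d n k = coeff n (g * f ^ k)) :
    (∃! A : K⟦X⟧, psComp A (X * f) = f) ∧
    ∀ A : K⟦X⟧, psComp A (X * f) = f →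
      ∀ n k, 1 ≤ k →
        d n k = ∑ j ∈ Finset.range (n + 1), coeff j A * d (n - j) (k + j - 1) :=
  stmt6_general g f hf0 d hd
end

section
/- Let (d_{n,k}) = (g; f_1,…,f_ℓ) be a multiple Riordan array, h an ℓ-th root of f_1⋯f_ℓ, and let (a_j) and (z_{m,j}) (0 ≤ m ≤ ℓ−1) be its A- and Z_m-sequences, i.e. A = Σ_j a_j t^{ℓj} satisfies t^ℓ·A(h) = h^ℓ and Z_m = Σ_j z_{m,j} t^{ℓj} satisfies g·f_1⋯f_m·(1 − t^ℓ·Z_m(h)) = g_0 f_{1,0}⋯f_{m,0}·t^m. Let (d̂_{n,k}) be the compression, extended by d̂_{p,q} = 0 whenever q > p. Then: (i) for all n ≥ k ≥ ℓ, d̂_{n,k} = Σ_{j=0}^{n} a_j d̂_{n−ℓ+j(ℓ−1), k+(j−1)ℓ}; and (ii) for each m ∈ {0,…,ℓ−1} and all n ≥ m+1, d̂_{n,m} = Σ_{j=0}^{n} z_{m,j} d̂_{n−1+j(ℓ−1), m+jℓ}. -/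
open PowerSeries Finset

/-- Entry `d_{n,k}` of the multiple Riordan array `(g; f_0, …, f_{ℓ-1})`: the `k`-th column,
`k = qℓ + m`, has generating function `g · f_0⋯f_{m-1} · (f_0⋯f_{ℓ-1})^q`. -/
noncomputable def mrEntry {K : Type*} [CommRing K] (ℓ : ℕ) (g : K⟦X⟧) (f : ℕ → K⟦X⟧)
    (n k : ℕ) : K :=
  coeff n (g * (∏ i ∈ Finset.range (k % ℓ), f i) * (∏ i ∈ Finset.range ℓ, f i) ^ (k / ℓ))

/-!
Column `k` of the array has generating function `c_k = g · f_0⋯f_{k%ℓ-1} · P^{k/ℓ}` with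
`P = f_0⋯f_{ℓ-1} = h^ℓ`, so `c_{k+jℓ} = c_k · h^{jℓ}`. Since `P = X^ℓ · A(h)`, we get
`c_k = X^ℓ · A(h) · c_{k-ℓ}`, and since `A` is a series in `t^ℓ`, expanding
`A(h) · c_{k-ℓ} = ∑_j a_j h^{jℓ} c_{k-ℓ} = ∑_j a_j c_{k-ℓ+jℓ}` gives (i); the row indices match
because `d̂_{r,c}` is the coefficient of `t^{rℓ-(ℓ-1)c}`, and this exponent is unchanged under
`(r, c) ↦ (r + j(ℓ-1), c + jℓ)`. For (ii) the defining identity of `Z_m` reads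
`c_m = const · X^m + X^ℓ · Z_m(h) · c_m`, and the same expansion applies.
-/

theorem Finset.sum_range_mul_of_eq_zero {M : Type*} [AddCommMonoid M] {ℓ : ℕ} (hℓ : 0 < ℓ)
    (F : ℕ → M) (hF : ∀ i, ¬ ℓ ∣ i → F i = 0) (n : ℕ) :
    ∑ i ∈ range (ℓ * n + 1), F i = ∑ j ∈ range (n + 1), F (ℓ * j) := by
  rw [← sum_image fun x _ y _ hxy => Nat.eq_of_mul_eq_mul_left hℓ hxy]
  symm
  apply sum_subset
  · intro i hi
    obtain ⟨j, hj, rfl⟩ := mem_image.mp hi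
    have : ℓ * j ≤ ℓ * n := Nat.mul_le_mul_left ℓ (by simpa [Nat.lt_succ_iff] using hj)
    simp only [mem_range]
    omega
  · rintro i hi hni
    refine hF i fun ⟨j, hij⟩ => hni (mem_image.mpr ⟨j, ?_, hij.symm⟩)
    have : ℓ * j < ℓ * (n + 1) := by simp only [mem_range] at hi; rw [mul_add]; omega
    simpa using Nat.lt_of_mul_lt_mul_left this

section PowerSeries

variable {K : Type*} [CommRing K] {S u : K⟦X⟧}

theorem coeff_psComp_mul (hu : constantCoeff u = 0) (W : K⟦X⟧) (M : ℕ) :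
    coeff M (psComp S u * W) = ∑ j ∈ range (M + 1), coeff j S * coeff M (u ^ j * W) := by
  have hpow : ∀ i j, i < j → coeff i (u ^ j) = 0 := fun i j hij =>
    X_pow_dvd_iff.mp (pow_dvd_pow_of_dvd (X_dvd_iff.mpr hu) j) i hij
  have hterm : ∀ p ∈ antidiagonal M, coeff p.1 (psComp S u) * coeff p.2 W
      = ∑ j ∈ range (M + 1), coeff j S * (coeff p.1 (u ^ j) * coeff p.2 W) := by
    intro p hp
    have hp1 : p.1 + 1 ≤ M + 1 := by have := mem_antidiagonal.mp hp; omega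
    rw [psComp, coeff_mk, sum_mul]
    refine sum_subset (range_subset_range.mpr hp1) (fun j _ hj => ?_) |>.trans
      (sum_congr rfl fun j _ => mul_assoc _ _ _)
    rw [hpow _ _ (by simpa using hj), mul_zero, zero_mul]
  rw [coeff_mul, sum_congr rfl hterm, sum_comm]
  exact sum_congr rfl fun j _ => by rw [← mul_sum, ← coeff_mul]

theorem coeff_psComp_mul_of_support_dvd {ℓ : ℕ} (hℓ : 0 < ℓ) (hS : ∀ n, ¬ ℓ ∣ n → coeff n S = 0)
    (hu : constantCoeff u = 0) (W : K⟦X⟧) {M n : ℕ} (hM : M ≤ ℓ * n) :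
    coeff M (psComp S u * W)
      = ∑ j ∈ range (n + 1), coeff (ℓ * j) S * coeff M (u ^ (ℓ * j) * W) := by
  rw [coeff_psComp_mul hu, ← sum_range_mul_of_eq_zero hℓ (fun j => coeff j S * coeff M (u ^ j * W))
    fun i hi => by rw [hS i hi, zero_mul]]
  refine sum_subset (range_subset_range.mpr (by omega)) fun j _ hj => ?_
  have hdvd : X ^ j ∣ u ^ j * W := dvd_mul_of_dvd_left (pow_dvd_pow_of_dvd (X_dvd_iff.mpr hu) j) W
  rw [X_pow_dvd_iff.mp hdvd M (by simpa using hj), mul_zero]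

end PowerSeries

section MultipleRiordan

variable {K : Type*} [CommRing K] {ℓ : ℕ} {g u S : K⟦X⟧} {f : ℕ → K⟦X⟧}

noncomputable def mrColumn (ℓ : ℕ) (g : K⟦X⟧) (f : ℕ → K⟦X⟧) (k : ℕ) : K⟦X⟧ :=
  g * (∏ i ∈ range (k % ℓ), f i) * (∏ i ∈ range ℓ, f i) ^ (k / ℓ)

/-- The compression `d̂_{n,k}` without the truncation to `k ≤ n`, which is automatic since
column `k` is divisible by `X ^ k` (`ite_mrEntry_eq_mrCompressed`). -/
noncomputable def mrCompressed (ℓ : ℕ) (g : K⟦X⟧) (f : ℕ → K⟦X⟧) (n k : ℕ) : K :=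
  coeff (n * ℓ - (ℓ - 1) * k) (mrColumn ℓ g f k)

theorem mrColumn_of_lt {m : ℕ} (hm : m < ℓ) : mrColumn ℓ g f m = g * ∏ i ∈ range m, f i := by
  rw [mrColumn, Nat.mod_eq_of_lt hm, Nat.div_eq_of_lt hm, pow_zero, mul_one]

theorem mrColumn_add_mul (hℓ : 0 < ℓ) (k j : ℕ) :
    mrColumn ℓ g f (k + j * ℓ) = mrColumn ℓ g f k * (∏ i ∈ range ℓ, f i) ^ j := by
  rw [mrColumn, mrColumn, Nat.add_mul_mod_self_right, Nat.add_mul_div_right _ _ hℓ, pow_add]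
  ring

theorem X_pow_dvd_mrColumn (hℓ : 0 < ℓ) (hf : ∀ i < ℓ, X ∣ f i) (k : ℕ) :
    X ^ k ∣ mrColumn ℓ g f k := by
  have hprod : ∀ m ≤ ℓ, (X : K⟦X⟧) ^ m ∣ ∏ i ∈ range m, f i := fun m hm => by
    simpa using prod_dvd_prod_of_dvd (s := range m) (fun _ => X) f
      fun i hi => hf i (by simp only [mem_range] at hi; omega)
  have hsplit : (X : K⟦X⟧) ^ k = X ^ (k % ℓ) * (X ^ ℓ) ^ (k / ℓ) := by
    rw [← pow_mul, ← pow_add, Nat.mod_add_div]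
  rw [mrColumn, mul_assoc, hsplit]
  exact dvd_mul_of_dvd_right (mul_dvd_mul (hprod _ (Nat.mod_lt k hℓ).le)
    (pow_dvd_pow_of_dvd (hprod ℓ le_rfl) _)) g

theorem ite_mrEntry_eq_mrCompressed (hℓ : 0 < ℓ) (hf : ∀ i < ℓ, X ∣ f i) (n k : ℕ) :
    (if k ≤ n then mrEntry ℓ g f (n * ℓ - (ℓ - 1) * k) k else 0) = mrCompressed ℓ g f n k := by
  split_ifs with hkn
  · rfl
  · have : n * ℓ < k * ℓ := Nat.mul_lt_mul_of_pos_right (by omega) hℓ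
    have : (ℓ - 1) * k + k = k * ℓ := by
      obtain ⟨L, rfl⟩ : ∃ L, ℓ = L + 1 := ⟨ℓ - 1, by omega⟩
      simp only [Nat.add_sub_cancel]; ring
    exact (X_pow_dvd_iff.mp (X_pow_dvd_mrColumn hℓ hf k) _ (by omega)).symm

theorem compress_index_add (ℓ r c j : ℕ) :
    (r + j * (ℓ - 1)) * ℓ - (ℓ - 1) * (c + j * ℓ) = r * ℓ - (ℓ - 1) * c := by
  rw [add_mul, mul_add, show j * (ℓ - 1) * ℓ = (ℓ - 1) * (j * ℓ) by ring, Nat.add_sub_add_right]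

/-- Only the coefficients `S_{ℓj}` survive, and `u ^ {ℓj}` times column `c` is column `c + jℓ`. -/
theorem coeff_psComp_mul_mrColumn (hℓ : 0 < ℓ) (hS : ∀ n, ¬ ℓ ∣ n → coeff n S = 0)
    (hu : constantCoeff u = 0) (hul : u ^ ℓ = ∏ i ∈ range ℓ, f i) {r c n : ℕ} (hrn : r ≤ n) :
    coeff (r * ℓ - (ℓ - 1) * c) (psComp S u * mrColumn ℓ g f c)
      = ∑ j ∈ range (n + 1),
          coeff (ℓ * j) S * mrCompressed ℓ g f (r + j * (ℓ - 1)) (c + j * ℓ) := by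
  have hM : r * ℓ - (ℓ - 1) * c ≤ ℓ * n :=
    (Nat.sub_le _ _).trans (by rw [mul_comm]; exact Nat.mul_le_mul_left ℓ hrn)
  rw [coeff_psComp_mul_of_support_dvd hℓ hS hu _ hM]
  refine sum_congr rfl fun j _ => ?_
  rw [mrCompressed, compress_index_add, mrColumn_add_mul hℓ, pow_mul, hul,
    mul_comm (mrColumn ℓ g f c)]

theorem mrCompressed_A_recurrence (hℓ : 0 < ℓ) (hS : ∀ n, ¬ ℓ ∣ n → coeff n S = 0)
    (hu : constantCoeff u = 0) (hul : u ^ ℓ = ∏ i ∈ range ℓ, f i) (hA : X ^ ℓ * psComp S u = u ^ ℓ)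
    {n k : ℕ} (hk : ℓ ≤ k) (hkn : k ≤ n) :
    mrCompressed ℓ g f n k = ∑ j ∈ range (n + 1),
      coeff (ℓ * j) S * mrCompressed ℓ g f (n - ℓ + j * (ℓ - 1)) (k + j * ℓ - ℓ) := by
  have hcol : mrColumn ℓ g f k = X ^ ℓ * (psComp S u * mrColumn ℓ g f (k - ℓ)) := by
    rw [← mul_assoc, hA, hul, mul_comm, ← pow_one (∏ i ∈ range ℓ, f i),
      ← mrColumn_add_mul hℓ, one_mul, Nat.sub_add_cancel hk]
  have hidx : n * ℓ - (ℓ - 1) * k = (n - ℓ) * ℓ - (ℓ - 1) * (k - ℓ) + ℓ := by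
    obtain ⟨L, rfl⟩ : ∃ L, ℓ = L + 1 := ⟨ℓ - 1, by omega⟩
    obtain ⟨a, rfl⟩ : ∃ a, k = a + (L + 1) := ⟨k - (L + 1), by omega⟩
    obtain ⟨b, rfl⟩ : ∃ b, n = b + (L + 1) := ⟨n - (L + 1), by omega⟩
    have : L * a ≤ L * b := Nat.mul_le_mul_left L (by omega)
    have e1 : (b + (L + 1)) * (L + 1) = L * b + b + L * (L + 1) + (L + 1) := by ring
    have e2 : L * (a + (L + 1)) = L * a + L * (L + 1) := by ring
    have e3 : b * (L + 1) = L * b + b := by ring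
    simp only [Nat.add_sub_cancel]
    omega
  rw [mrCompressed, hcol, hidx, coeff_X_pow_mul,
    coeff_psComp_mul_mrColumn hℓ hS hu hul (Nat.sub_le n ℓ)]
  exact sum_congr rfl fun j _ => by rw [Nat.sub_add_comm hk]

theorem mrCompressed_Z_recurrence (hS : ∀ n, ¬ ℓ ∣ n → coeff n S = 0) (hu : constantCoeff u = 0)
    (hul : u ^ ℓ = ∏ i ∈ range ℓ, f i) {m : ℕ} (hm : m < ℓ) {c : K}
    (hZ : g * (∏ i ∈ range m, f i) * (1 - X ^ ℓ * psComp S u) = C c * X ^ m)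
    {n : ℕ} (hn : m + 1 ≤ n) :
    mrCompressed ℓ g f n m = ∑ j ∈ range (n + 1),
      coeff (ℓ * j) S * mrCompressed ℓ g f (n - 1 + j * (ℓ - 1)) (m + j * ℓ) := by
  have hcol : mrColumn ℓ g f m = C c * X ^ m + X ^ ℓ * (psComp S u * mrColumn ℓ g f m) := by
    rw [mrColumn_of_lt hm]
    linear_combination hZ
  have hidx : n * ℓ - (ℓ - 1) * m = (n - 1) * ℓ - (ℓ - 1) * m + ℓ := by
    obtain ⟨L, rfl⟩ : ∃ L, ℓ = L + 1 := ⟨ℓ - 1, by omega⟩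
    obtain ⟨b, rfl⟩ : ∃ b, n = b + 1 := ⟨n - 1, by omega⟩
    have : L * m ≤ L * b := Nat.mul_le_mul_left L (by omega)
    have e1 : (b + 1) * (L + 1) = L * b + b + (L + 1) := by ring
    have e2 : b * (L + 1) = L * b + b := by ring
    simp only [Nat.add_sub_cancel]
    omega
  rw [mrCompressed, hcol, map_add, coeff_C_mul_X_pow, if_neg (by omega), zero_add, hidx,
    coeff_X_pow_mul, coeff_psComp_mul_mrColumn (by omega) hS hu hul (by omega : n - 1 ≤ n)]

end MultipleRiordan

theorem stmt18_general {K : Type*} [Field K] (ℓ : ℕ) (hℓ : 2 ≤ ℓ)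
    (g : K⟦X⟧) (f : ℕ → K⟦X⟧)
    (hf : ∀ i < ℓ, ∀ n, n % ℓ ≠ 1 → coeff n (f i) = 0)
    (h : K⟦X⟧) (hhs : ∀ n, n % ℓ ≠ 1 → coeff n h = 0)
    (hhl : h ^ ℓ = ∏ i ∈ Finset.range ℓ, f i)
    (A : K⟦X⟧) (hAs : ∀ n, ¬ (ℓ ∣ n) → coeff n A = 0)
    (hA : X ^ ℓ * psComp A h = h ^ ℓ)
    (Z : ℕ → K⟦X⟧) (hZs : ∀ m < ℓ, ∀ n, ¬ (ℓ ∣ n) → coeff n (Z m) = 0)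
    (hZ : ∀ m < ℓ,
      g * (∏ i ∈ Finset.range m, f i) * (1 - X ^ ℓ * psComp (Z m) h)
        = C (constantCoeff g * ∏ i ∈ Finset.range m, coeff 1 (f i)) * X ^ m)
    (d : ℕ → ℕ → K) (hd : ∀ n k, d n k = mrEntry ℓ g f n k)
    (dhat : ℕ → ℕ → K)
    (hdhat : ∀ n k, dhat n k = if k ≤ n then d (n * ℓ - (ℓ - 1) * k) k else 0) :
    (∀ n k, ℓ ≤ k → k ≤ n →
      dhat n k = ∑ j ∈ Finset.range (n + 1),
        coeff (ℓ * j) A * dhat (n - ℓ + j * (ℓ - 1)) (k + j * ℓ - ℓ)) ∧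
    (∀ m < ℓ, ∀ n, m + 1 ≤ n →
      dhat n m = ∑ j ∈ Finset.range (n + 1),
        coeff (ℓ * j) (Z m) * dhat (n - 1 + j * (ℓ - 1)) (m + j * ℓ)) := by
  have hℓ0 : 0 < ℓ := by omega
  have hzero : 0 % ℓ ≠ 1 := by rw [Nat.zero_mod]; omega
  have hh0 : constantCoeff h = 0 := by rw [← coeff_zero_eq_constantCoeff_apply, hhs 0 hzero]
  have hfX : ∀ i < ℓ, X ∣ f i := fun i hi => X_dvd_iff.mpr <| by
    rw [← coeff_zero_eq_constantCoeff_apply, hf i hi 0 hzero]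
  have hdhat' : ∀ n k, dhat n k = mrCompressed ℓ g f n k := fun n k => by
    simp only [hdhat, hd, ite_mrEntry_eq_mrCompressed hℓ0 hfX]
  simp only [hdhat']
  exact ⟨fun n k hk hkn => mrCompressed_A_recurrence hℓ0 hAs hh0 hhl hA hk hkn,
    fun m hm n hn => mrCompressed_Z_recurrence (hZs m hm) hh0 hhl hm (hZ m hm) hn⟩

/-- Sequence characterization of the compression of a multiple Riordan array:
the `A`- and `Z_m`-sequences of `(g; f_0, …, f_{ℓ-1})` also generate the rows of the
compression `d̂_{n,k} = d_{nℓ−(ℓ−1)k,k}` (extended by `0` above the diagonal). -/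
theorem stmt18 {K : Type*} [Field K] [CharZero K] (ℓ : ℕ) (hℓ : 2 ≤ ℓ)
    (g : K⟦X⟧) (f : ℕ → K⟦X⟧)
    (hg : ∀ n, ¬ (ℓ ∣ n) → coeff n g = 0) (hg0 : constantCoeff g ≠ 0)
    (hf : ∀ i < ℓ, ∀ n, n % ℓ ≠ 1 → coeff n (f i) = 0)
    (hf1 : ∀ i < ℓ, coeff 1 (f i) ≠ 0)
    (h : K⟦X⟧) (hhs : ∀ n, n % ℓ ≠ 1 → coeff n h = 0) (hh1 : coeff 1 h ≠ 0)
    (hhl : h ^ ℓ = ∏ i ∈ Finset.range ℓ, f i)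
    (A : K⟦X⟧) (hAs : ∀ n, ¬ (ℓ ∣ n) → coeff n A = 0)
    (hA : X ^ ℓ * psComp A h = h ^ ℓ)
    (Z : ℕ → K⟦X⟧) (hZs : ∀ m < ℓ, ∀ n, ¬ (ℓ ∣ n) → coeff n (Z m) = 0)
    (hZ : ∀ m < ℓ,
      g * (∏ i ∈ Finset.range m, f i) * (1 - X ^ ℓ * psComp (Z m) h)
        = C (constantCoeff g * ∏ i ∈ Finset.range m, coeff 1 (f i)) * X ^ m)
    (d : ℕ → ℕ → K) (hd : ∀ n k, d n k = mrEntry ℓ g f n k)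
    (dhat : ℕ → ℕ → K)
    (hdhat : ∀ n k, dhat n k = if k ≤ n then d (n * ℓ - (ℓ - 1) * k) k else 0) :
    (∀ n k, ℓ ≤ k → k ≤ n →
      dhat n k = ∑ j ∈ Finset.range (n + 1),
        coeff (ℓ * j) A * dhat (n - ℓ + j * (ℓ - 1)) (k + j * ℓ - ℓ)) ∧
    (∀ m < ℓ, ∀ n, m + 1 ≤ n →
      dhat n m = ∑ j ∈ Finset.range (n + 1),
        coeff (ℓ * j) (Z m) * dhat (n - 1 + j * (ℓ - 1)) (m + j * ℓ)) :=
  stmt18_general ℓ hℓ g f hf h hhs hhl A hAs hA Z hZs hZ d hd dhat hdhat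
end
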